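/- arXiv:2503.18046 — 4 statements merged into one kernel-verified Lean document; each statement's English description precedes it below -/
import Mathlib

section
/- For a Markov chain on a measurable state space with transition kernel P and a measurable set A, the function x ↦ E_x[τ_A^+ · 1_{τ_A^+ < ∞}] (where τ_A^+ = inf{n ≥ 1 : X_n ∈ A}) is the minimal nonnegative solution V to the equation V(x) = ∫_{A^c} V(y) P(x, dy) + P_x(τ_A^+ < ∞) for all x in the state space. -/
/-!
Write `f n` for `retProb P A n` and `T V x = ∫⁻ y in Aᶜ, V y ∂(P x)`, so that `f (n + 1) = T (f n)`.
Shifting the index splits `∑ (n + 1) f n` into `T (∑ (n + 1) f n) + ∑ f n`, which is the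
equation. For minimality, the same split of the partial sums shows that the partial sum up to
`N + 1` is `T` of the partial sum up to `N` plus a partial sum of `∑ f n`; as `T` is monotone,
induction on `N` bounds every partial sum by any solution `V`.
-/

open MeasureTheory ENNReal Finset

/-- `retProb P A n x` is the probability, starting from `x`, that the first return time
`τ_A^+ = inf {k ≥ 1 : X_k ∈ A}` equals `n + 1`, for the Markov chain with one-step
transition kernel `P`. -/
noncomputable def retProb {X : Type*} [MeasurableSpace X] (P : X → Measure X) (A : Set X) :
    ℕ → X → ℝ≥0∞
  | 0 => fun x => P x A
  | (n + 1) => fun x => ∫⁻ y in Aᶜ, retProb P A n y ∂(P x)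

lemma sum_range_succ_natCast_add_one_mul {R : Type*} [CommSemiring R] (f : ℕ → R) (N : ℕ) :
    ∑ n ∈ range (N + 1), ((n : R) + 1) * f n
      = ∑ n ∈ range N, ((n : R) + 1) * f (n + 1) + ∑ n ∈ range (N + 1), f n := by
  have hsucc (n : ℕ) :
      ((n + 1 : ℕ) + 1 : R) * f (n + 1) = ((n : R) + 1) * f (n + 1) + f (n + 1) := by
    push_cast
    ring
  rw [sum_range_succ', sum_range_succ' (fun n => f n), sum_congr rfl fun n _ => hsucc n,
    sum_add_distrib]
  push_cast
  ring

lemma ENNReal.tsum_natCast_add_one_mul (f : ℕ → ℝ≥0∞) :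
    ∑' n : ℕ, ((n : ℝ≥0∞) + 1) * f n
      = ∑' n : ℕ, ((n : ℝ≥0∞) + 1) * f (n + 1) + ∑' n : ℕ, f n := by
  have hshift : ∑' n : ℕ, (n : ℝ≥0∞) * f n = ∑' n : ℕ, ((n : ℝ≥0∞) + 1) * f (n + 1) := by
    rw [tsum_eq_zero_add' ENNReal.summable]
    simp
  simp only [add_mul, one_mul, ENNReal.tsum_add, hshift]

section retProb

variable {X : Type*} [MeasurableSpace X] {P : X → Measure X} {A : Set X}

lemma measurable_retProb (hPm : Measurable P) (hA : MeasurableSet A) (n : ℕ) :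
    Measurable (retProb P A n) := by
  induction n with
  | zero => exact (Measure.measurable_coe hA).comp hPm
  | succ n ih =>
    have h : retProb P A (n + 1) = fun x => ∫⁻ y, Aᶜ.indicator (retProb P A n) y ∂(P x) := by
      funext x
      rw [lintegral_indicator hA.compl]
      rfl
    rw [h]
    exact (Measure.measurable_lintegral (ih.indicator hA.compl)).comp hPm

variable (hPm : Measurable P) (hA : MeasurableSet A)
include hPm hA

lemma lintegral_sum_mul_retProb (c : ℕ → ℝ≥0∞) (s : Finset ℕ) (x : X) :
    ∫⁻ y in Aᶜ, ∑ n ∈ s, c n * retProb P A n y ∂(P x)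
      = ∑ n ∈ s, c n * retProb P A (n + 1) x := by
  rw [lintegral_finsetSum _ fun n _ => (measurable_retProb hPm hA n).const_mul _]
  exact sum_congr rfl fun n _ => lintegral_const_mul _ (measurable_retProb hPm hA n)

lemma lintegral_tsum_mul_retProb (c : ℕ → ℝ≥0∞) (x : X) :
    ∫⁻ y in Aᶜ, ∑' n : ℕ, c n * retProb P A n y ∂(P x)
      = ∑' n : ℕ, c n * retProb P A (n + 1) x := by
  rw [lintegral_tsum fun n => ((measurable_retProb hPm hA n).const_mul _).aemeasurable]
  exact tsum_congr fun n => lintegral_const_mul _ (measurable_retProb hPm hA n)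

end retProb

theorem expected_return_time_is_minimal_solution_general
    {X : Type*} [MeasurableSpace X] (P : X → Measure X)
    (hPm : Measurable P)
    (A : Set X) (hA : MeasurableSet A) :
    (∀ x, (∑' n : ℕ, ((n : ℝ≥0∞) + 1) * retProb P A n x)
        = (∫⁻ y in Aᶜ, (∑' n : ℕ, ((n : ℝ≥0∞) + 1) * retProb P A n y) ∂(P x))
          + ∑' n : ℕ, retProb P A n x) ∧
    (∀ V : X → ℝ≥0∞,
      (∀ x, V x = (∫⁻ y in Aᶜ, V y ∂(P x)) + ∑' n : ℕ, retProb P A n x) →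
      ∀ x, (∑' n : ℕ, ((n : ℝ≥0∞) + 1) * retProb P A n x) ≤ V x) := by
  refine ⟨fun x => ?_, fun V hV => ?_⟩
  · rw [ENNReal.tsum_natCast_add_one_mul, lintegral_tsum_mul_retProb hPm hA]
  · have partial_le : ∀ N x, ∑ n ∈ range N, ((n : ℝ≥0∞) + 1) * retProb P A n x ≤ V x := by
      intro N
      induction N with
      | zero => simp
      | succ N ih =>
        intro x
        rw [sum_range_succ_natCast_add_one_mul, ← lintegral_sum_mul_retProb hPm hA, hV x]
        gcongr
        · exact ih _
        · exact ENNReal.sum_le_tsum _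
    exact fun x => ENNReal.tsum_le_of_sum_range_le (partial_le · x)

/-- The function `x ↦ E_x[τ_A^+ · 1_{τ_A^+ < ∞}] = ∑ (n+1) P_x(τ_A^+ = n+1)`
is the minimal nonnegative solution `V` of
`V(x) = ∫_{A^c} V(y) P(x, dy) + P_x(τ_A^+ < ∞)` on the whole state space. -/
theorem expected_return_time_is_minimal_solution
    {X : Type*} [MeasurableSpace X] (P : X → Measure X)
    (hP : ∀ x, IsProbabilityMeasure (P x)) (hPm : Measurable P)
    (A : Set X) (hA : MeasurableSet A) :
    (∀ x, (∑' n : ℕ, ((n : ℝ≥0∞) + 1) * retProb P A n x)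
        = (∫⁻ y in Aᶜ, (∑' n : ℕ, ((n : ℝ≥0∞) + 1) * retProb P A n y) ∂(P x))
          + ∑' n : ℕ, retProb P A n x) ∧
    (∀ V : X → ℝ≥0∞,
      (∀ x, V x = (∫⁻ y in Aᶜ, V y ∂(P x)) + ∑' n : ℕ, retProb P A n x) →
      ∀ x, (∑' n : ℕ, ((n : ℝ≥0∞) + 1) * retProb P A n x) ≤ V x) :=
  expected_return_time_is_minimal_solution_general P hPm A hA
end

section
/- Let H be a cone mapping on nonnegative functions and {g_n} a sequence of nonnegative functions with Σ_{n=1}^∞ g_n = g. Define f̃^(1) = g_1 and f̃^(n+1) = H f̃^(n) + g_{n+1}. Then the minimal nonnegative solution to f = Hf + g equals Σ_{n=1}^∞ f̃^(n). -/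
open ENNReal

/-- `f⋆` is the minimal nonnegative solution of the equation `f = H f + g`. -/
def IsMinSol {X : Type*} (H : (X → ℝ≥0∞) → (X → ℝ≥0∞)) (g fstar : X → ℝ≥0∞) : Prop :=
  (∀ x, fstar x = H fstar x + g x) ∧
    ∀ f : X → ℝ≥0∞, (∀ x, f x = H f x + g x) → fstar ≤ f

section aux

variable {X : Type*} (H : (X → ℝ≥0∞) → (X → ℝ≥0∞))

lemma Haux_add
    (hHadd : ∀ (c₁ c₂ : ℝ≥0∞) (f₁ f₂ : X → ℝ≥0∞),
      H (c₁ • f₁ + c₂ • f₂) = c₁ • H f₁ + c₂ • H f₂)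
    (f₁ f₂ : X → ℝ≥0∞) : H (f₁ + f₂) = H f₁ + H f₂ := by
  simpa using hHadd 1 1 f₁ f₂

lemma Haux_mono
    (hHadd : ∀ (c₁ c₂ : ℝ≥0∞) (f₁ f₂ : X → ℝ≥0∞),
      H (c₁ • f₁ + c₂ • f₂) = c₁ • H f₁ + c₂ • H f₂)
    {f₁ f₂ : X → ℝ≥0∞} (h : f₁ ≤ f₂) : H f₁ ≤ H f₂ := by
  have hsum : f₁ + (f₂ - f₁) = f₂ := funext fun x => add_tsub_cancel_of_le (h x)
  calc H f₁ ≤ H f₁ + H (f₂ - f₁) := le_self_add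
    _ = H (f₁ + (f₂ - f₁)) := (Haux_add H hHadd _ _).symm
    _ = H f₂ := by rw [hsum]

lemma iSup_shift {u : ℕ → ℝ≥0∞} (hu : Monotone u) : ⨆ n, u n = ⨆ n, u (n + 1) := by
  refine le_antisymm (iSup_le fun n => ?_) (iSup_le fun n => le_iSup u (n + 1))
  exact (hu n.le_succ).trans (le_iSup (fun n => u (n + 1)) n)

end aux

/-- second successive approximation scheme. Let `H` be a cone mapping and
`gs` a sequence of nonnegative functions with `∑ n, gs n = g`. Define `f̃⁽⁰⁾ = gs 0` and
`f̃⁽ⁿ⁺¹⁾ = H f̃⁽ⁿ⁾ + gs (n+1)`. Then the minimal nonnegative solution of `f = H f + g`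
equals `∑ n, f̃⁽ⁿ⁾`. -/
theorem minimal_solution_second_iteration {X : Type*}
    (H : (X → ℝ≥0∞) → (X → ℝ≥0∞)) (gs : ℕ → X → ℝ≥0∞) (g : X → ℝ≥0∞)
    (hH0 : H 0 = 0)
    (hHadd : ∀ (c₁ c₂ : ℝ≥0∞) (f₁ f₂ : X → ℝ≥0∞),
      H (c₁ • f₁ + c₂ • f₂) = c₁ • H f₁ + c₂ • H f₂)
    (hHcont : ∀ fs : ℕ → X → ℝ≥0∞, Monotone fs → H (⨆ n, fs n) = ⨆ n, H (fs n))
    (hg : ∀ x, g x = ∑' n : ℕ, gs n x)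
    (ft : ℕ → X → ℝ≥0∞)
    (hft0 : ft 0 = gs 0)
    (hftS : ∀ n : ℕ, ft (n + 1) = fun x => H (ft n) x + gs (n + 1) x) :
    IsMinSol H g (fun x => ∑' n : ℕ, ft n x) := by
  set P : ℕ → X → ℝ≥0∞ := fun n x => ∑ i ∈ Finset.range n, ft i x with hPdef
  set G : ℕ → X → ℝ≥0∞ := fun n x => ∑ i ∈ Finset.range n, gs i x with hGdef
  have hPmono : Monotone P := fun m n h x =>
    Finset.sum_le_sum_of_subset (Finset.range_subset_range.2 h)
  have hP0 : P 0 = 0 := by funext x; simp [hPdef]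
  have hPstep : ∀ n, P (n + 1) = P n + ft n := by
    intro n; funext x; simp [hPdef, Finset.sum_range_succ]
  have hGstep : ∀ n, G (n + 1) = G n + gs n := by
    intro n; funext x; simp [hGdef, Finset.sum_range_succ]
  have hPsucc : ∀ n, P (n + 1) = H (P n) + G (n + 1) := by
    intro n
    induction n with
    | zero =>
      rw [hPstep, hP0, hH0, hft0, hGstep]
      funext x; simp [hGdef]
    | succ n ih =>
      calc P (n + 2) = P (n + 1) + ft (n + 1) := hPstep _
        _ = (H (P n) + G (n + 1)) + (H (ft n) + gs (n + 1)) := by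
              rw [ih, hftS n]; rfl
        _ = (H (P n) + H (ft n)) + (G (n + 1) + gs (n + 1)) :=
              add_add_add_comm _ _ _ _
        _ = H (P (n + 1)) + G (n + 2) := by
              rw [← Haux_add H hHadd, ← hPstep, ← hGstep]
  set S : X → ℝ≥0∞ := fun x => ∑' n : ℕ, ft n x with hSdef
  have hS : S = ⨆ n, P n := by
    funext x
    rw [iSup_apply, hSdef]
    exact ENNReal.tsum_eq_iSup_nat
  have hHS : ∀ x, H S x = ⨆ n, H (P n) x := by
    intro x
    rw [hS, hHcont P hPmono, iSup_apply]
  have hgG : ∀ x, g x = ⨆ n, G n x := by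
    intro x
    rw [hg x, hGdef]
    exact ENNReal.tsum_eq_iSup_nat
  have hGmono : ∀ x, Monotone fun n => G n x := fun x m n h =>
    Finset.sum_le_sum_of_subset (Finset.range_subset_range.2 h)
  have hHPmono : ∀ x, Monotone fun n => H (P n) x := fun x m n h =>
    Haux_mono H hHadd (hPmono h) x
  constructor
  · intro x
    have h1 : S x = ⨆ n, P (n + 1) x := by
      rw [hS, iSup_apply]
      exact iSup_shift fun m n h => hPmono h x
    calc S x = ⨆ n, P (n + 1) x := h1
      _ = ⨆ n, (H (P n) x + G (n + 1) x) := by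
          refine iSup_congr fun n => ?_
          rw [hPsucc n]; rfl
      _ = (⨆ n, H (P n) x) + ⨆ n, G (n + 1) x := by
          exact (ENNReal.iSup_add_iSup_of_monotone (hHPmono x)
            (fun m n h => hGmono x (Nat.succ_le_succ h) :
              Monotone fun n => G (n + 1) x)).symm
      _ = H S x + g x := by
          rw [hHS x, hgG x, iSup_shift (hGmono x)]
  · intro f hf
    have hfix : H f + g = f := by
      funext x; exact (hf x).symm
    have hGle : ∀ n, G n ≤ g := by
      intro n x
      rw [hg x]
      exact ENNReal.sum_le_tsum _
    have hPle : ∀ n, P n ≤ f := by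
      intro n
      induction n with
      | zero => rw [hP0]; exact fun x => zero_le
      | succ n ih =>
        rw [hPsucc n]
        calc H (P n) + G (n + 1) ≤ H f + g :=
              add_le_add (Haux_mono H hHadd ih) (hGle (n + 1))
          _ = f := hfix
    intro x
    rw [hS, iSup_apply]
    exact iSup_le fun n => hPle n x
end

section
/- Let f* be the minimal nonnegative solution to f = Hf + g, and let f̂ be a nonnegative function satisfying f̂ ≤ H f̂ + g pointwise. If f̂ ≤ p f* for some nonnegative constant p, then f̂ ≤ f* pointwise. -/
open ENNReal NNReal

/-- Partial sums `Sseq n = ∑_{k < n} H^k g`, defined recursively. -/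
noncomputable def Sseq {X : Type*} (H : (X → ℝ≥0∞) → (X → ℝ≥0∞)) (g : X → ℝ≥0∞) :
    ℕ → X → ℝ≥0∞
  | 0 => 0
  | n + 1 => H (Sseq H g n) + g

/-- Let `f⋆` be the minimal nonnegative solution to `f = H f + g`, with `H`
a cone mapping, and let `f̂` be nonnegative with `f̂ ≤ H f̂ + g` pointwise. If `f̂ ≤ p • f⋆`
for some nonnegative (finite) constant `p`, then `f̂ ≤ f⋆` pointwise. -/
theorem sub_solution_le_minimal_solution {X : Type*}
    (H : (X → ℝ≥0∞) → (X → ℝ≥0∞)) (g fstar fhat : X → ℝ≥0∞)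
    (hH0 : H 0 = 0)
    (hHadd : ∀ (c₁ c₂ : ℝ≥0∞) (f₁ f₂ : X → ℝ≥0∞),
      H (c₁ • f₁ + c₂ • f₂) = c₁ • H f₁ + c₂ • H f₂)
    (hHcont : ∀ fs : ℕ → X → ℝ≥0∞, Monotone fs → H (⨆ n, fs n) = ⨆ n, H (fs n))
    (hmin : IsMinSol H g fstar)
    (hhat : ∀ x, fhat x ≤ H fhat x + g x)
    (p : ℝ≥0) (hp : ∀ x, fhat x ≤ (p : ℝ≥0∞) * fstar x) :
    fhat ≤ fstar := by
  set S := Sseq H g with hS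
  -- basic properties of H
  have Hadd : ∀ f₁ f₂ : X → ℝ≥0∞, H (f₁ + f₂) = H f₁ + H f₂ := by
    intro f₁ f₂; simpa using hHadd 1 1 f₁ f₂
  have Hsmul : ∀ (c : ℝ≥0∞) (f : X → ℝ≥0∞), H (c • f) = c • H f := by
    intro c f; simpa [hH0] using hHadd c 0 f 0
  have Hmono : ∀ f₁ f₂ : X → ℝ≥0∞, f₁ ≤ f₂ → H f₁ ≤ H f₂ := by
    intro f₁ f₂ h
    have he : f₂ = f₁ + (f₂ - f₁) := by
      funext x
      exact (add_tsub_cancel_of_le (h x)).symm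
    rw [he, Hadd]
    exact le_self_add
  have Hiter_mono : ∀ (n : ℕ) (f₁ f₂ : X → ℝ≥0∞), f₁ ≤ f₂ → H^[n] f₁ ≤ H^[n] f₂ := by
    intro n
    induction n with
    | zero => intro f₁ f₂ h; simpa using h
    | succ n ih =>
      intro f₁ f₂ h
      rw [Function.iterate_succ_apply', Function.iterate_succ_apply']
      exact Hmono _ _ (ih _ _ h)
  -- fstar decomposes as H^[n] fstar + S n
  have key1 : ∀ n, fstar = H^[n] fstar + S n := by
    intro n
    induction n with
    | zero => simp [hS, Sseq]
    | succ n ih =>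
      have h1 : fstar = H fstar + g := funext hmin.1
      calc fstar = H fstar + g := h1
        _ = H (H^[n] fstar + S n) + g := by rw [← ih]
        _ = (H^[n+1] fstar) + (H (S n) + g) := by
            rw [Hadd, Function.iterate_succ_apply', add_assoc]
        _ = H^[n+1] fstar + S (n+1) := rfl
  -- fhat is dominated by H^[n] fhat + S n
  have key2 : ∀ n, fhat ≤ H^[n] fhat + S n := by
    intro n
    induction n with
    | zero => simp [hS, Sseq]
    | succ n ih =>
      intro x
      calc fhat x ≤ H fhat x + g x := hhat x
        _ ≤ H (H^[n] fhat + S n) x + g x := by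
            exact add_le_add (Hmono _ _ ih x) le_rfl
        _ = H^[n+1] fhat x + (H (S n) x + g x) := by
            rw [Hadd, Function.iterate_succ_apply']
            simp [add_assoc]
        _ = (H^[n+1] fhat + S (n+1)) x := rfl
  -- iterates commute with scalar multiplication
  have key3 : ∀ n, H^[n] ((p : ℝ≥0∞) • fstar) = (p : ℝ≥0∞) • H^[n] fstar := by
    intro n
    induction n with
    | zero => simp
    | succ n ih =>
      rw [Function.iterate_succ_apply', ih, Hsmul, Function.iterate_succ_apply']
  -- S is monotone
  have Smono : Monotone S := by
    refine monotone_nat_of_le_succ ?_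
    intro n
    induction n with
    | zero => simp [hS, Sseq]
    | succ n ih =>
      show H (S n) + g ≤ H (S (n+1)) + g
      exact add_le_add (Hmono _ _ ih) le_rfl
  -- S n ≤ fstar
  have Sle : ∀ n, S n ≤ fstar := by
    intro n x
    rw [key1 n]
    exact le_add_self
  -- the supremum of S is a solution, hence equals fstar
  have hsol : ∀ x, (⨆ n, S n) x = H (⨆ n, S n) x + g x := by
    intro x
    have hmx : Monotone fun n => S n x := fun a b hab => Smono hab x
    rw [hHcont S Smono, iSup_apply, iSup_apply, ENNReal.iSup_add]
    exact (hmx.iSup_nat_add 1).symm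
  have hfle : fstar ≤ ⨆ n, S n := hmin.2 _ hsol
  have hsup_eq : ∀ x, (⨆ n, S n x) = fstar x := by
    intro x
    refine le_antisymm (iSup_le fun n => Sle n x) ?_
    have := hfle x
    rwa [iSup_apply] at this
  -- final pointwise argument
  intro x
  by_cases htop : fstar x = ∞
  · simp [htop]
  · refine ENNReal.le_of_forall_pos_le_add ?_
    intro ε hε hlt
    -- choose δ with p * δ ≤ ε
    set δ : ℝ≥0∞ := (ε : ℝ≥0∞) / ((p : ℝ≥0∞) + 1) with hδ
    have hδ0 : δ ≠ 0 := by
      simp [hδ, ENNReal.div_eq_zero_iff]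
      exact fun h => absurd h (by exact_mod_cast hε.ne')
    have hpδ : (p : ℝ≥0∞) * δ ≤ ε := by
      calc (p : ℝ≥0∞) * δ ≤ ((p : ℝ≥0∞) + 1) * δ := by gcongr; exact le_self_add
        _ = ε := by rw [hδ]; exact ENNReal.mul_div_cancel' (by simp) (by simp)
    -- find n with fstar x ≤ S n x + δ
    obtain ⟨n, hn⟩ : ∃ n, fstar x ≤ S n x + δ := by
      by_cases h0 : fstar x ≤ δ
      · exact ⟨0, h0.trans le_add_self⟩
      · have hlt' : fstar x - δ < fstar x :=
          ENNReal.sub_lt_self htop (fun h => h0 (by simp [h])) hδ0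
        rw [← hsup_eq x] at hlt'
        obtain ⟨n, hn⟩ := lt_iSup_iff.mp hlt'
        refine ⟨n, ?_⟩
        rw [← hsup_eq x]
        exact tsub_le_iff_right.mp hn.le
    -- H^[n] fstar x ≤ δ
    have hSnt : S n x ≠ ∞ := fun h => htop (by
      have := Sle n x; rw [h] at this; exact top_le_iff.mp this)
    have hHn : H^[n] fstar x ≤ δ := by
      have h1 : H^[n] fstar x + S n x = fstar x := (congrFun (key1 n) x).symm
      have h2 : H^[n] fstar x + S n x ≤ S n x + δ := h1.le.trans hn
      rw [add_comm (S n x) δ] at h2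
      exact (ENNReal.add_le_add_iff_right hSnt).mp h2
    -- conclude
    have h3 : fhat x ≤ H^[n] fhat x + S n x := key2 n x
    have h4 : H^[n] fhat x ≤ (p : ℝ≥0∞) * H^[n] fstar x := by
      have := Hiter_mono n fhat ((p : ℝ≥0∞) • fstar) (fun y => hp y) x
      rwa [key3 n] at this
    calc fhat x ≤ H^[n] fhat x + S n x := h3
      _ ≤ (p : ℝ≥0∞) * H^[n] fstar x + S n x := add_le_add h4 le_rfl
      _ ≤ (p : ℝ≥0∞) * δ + fstar x := add_le_add (by gcongr) (Sle n x)
      _ ≤ ε + fstar x := add_le_add hpδ le_rfl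
      _ = fstar x + ε := add_comm _ _
end

section
/- Let H be a cone mapping on nonnegative functions, {H_n} cone mappings with H_n ↑ H, and {g_n} nonnegative functions with g_n ↑ g. Then the minimal nonnegative solutions satisfy m_{H_n}(g_n) ↑ m_H(g) pointwise, where m_H(g) denotes the minimal nonnegative solution of f = Hf + g. -/
open ENNReal

section Aux

variable {X : Type*}

/-- An additive map on nonnegative functions is monotone. -/
lemma cone_mono (H : (X → ℝ≥0∞) → (X → ℝ≥0∞))
    (hadd : ∀ (c₁ c₂ : ℝ≥0∞) (f₁ f₂ : X → ℝ≥0∞),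
      H (c₁ • f₁ + c₂ • f₂) = c₁ • H f₁ + c₂ • H f₂) :
    Monotone H := by
  intro f f' hle
  have hsum : f + (f' - f) = f' := by
    funext x; exact add_tsub_cancel_of_le (hle x)
  have h2 : H f' = H f + H (f' - f) := by
    have := hadd 1 1 f (f' - f)
    simpa [one_smul, hsum] using this
  rw [h2]; exact le_self_add

/-- The Picard iterates for the equation `f = H f + g`. -/
noncomputable def iterSol (H : (X → ℝ≥0∞) → (X → ℝ≥0∞)) (g : X → ℝ≥0∞) : ℕ → X → ℝ≥0∞ :=
  fun k => Nat.rec 0 (fun _ f => H f + g) k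

lemma iterSol_zero (H : (X → ℝ≥0∞) → (X → ℝ≥0∞)) (g : X → ℝ≥0∞) :
    iterSol H g 0 = 0 := rfl

lemma iterSol_succ (H : (X → ℝ≥0∞) → (X → ℝ≥0∞)) (g : X → ℝ≥0∞) (k : ℕ) :
    iterSol H g (k + 1) = H (iterSol H g k) + g := rfl

lemma iterSol_mono (H : (X → ℝ≥0∞) → (X → ℝ≥0∞)) (g : X → ℝ≥0∞)
    (hmono : Monotone H) : Monotone (iterSol H g) := by
  apply monotone_nat_of_le_succ
  intro k
  induction k with
  | zero => exact zero_le
  | succ k ih => exact add_le_add (hmono ih) le_rfl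

lemma iterSol_le_sol (H : (X → ℝ≥0∞) → (X → ℝ≥0∞)) (g : X → ℝ≥0∞)
    (hmono : Monotone H) (f : X → ℝ≥0∞) (hf : ∀ x, f x = H f x + g x) :
    ∀ k, iterSol H g k ≤ f := by
  intro k
  induction k with
  | zero => exact zero_le
  | succ k ih =>
    intro x
    calc (H (iterSol H g k) + g) x = H (iterSol H g k) x + g x := rfl
      _ ≤ H f x + g x := add_le_add (hmono ih x) le_rfl
      _ = f x := (hf x).symm

lemma iSup_succ_eq {α : Type*} [CompleteLattice α] (a : ℕ → α) (ha : Monotone a) :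
    (⨆ k, a (k + 1)) = ⨆ k, a k :=
  le_antisymm (iSup_le fun k => le_iSup a (k + 1)) (iSup_mono fun k => ha (Nat.le_succ k))

lemma iSup_iterSol_sol (H : (X → ℝ≥0∞) → (X → ℝ≥0∞)) (g : X → ℝ≥0∞)
    (hmono : Monotone H)
    (hcont : ∀ fs : ℕ → X → ℝ≥0∞, Monotone fs → H (⨆ n, fs n) = ⨆ n, H (fs n)) :
    ∀ x, (⨆ k, iterSol H g k) x = H (⨆ k, iterSol H g k) x + g x := by
  intro x
  have hm := iterSol_mono H g hmono
  rw [hcont _ hm, iSup_apply, iSup_apply, ENNReal.iSup_add]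
  have : (⨆ k, H (iterSol H g k) x + g x) = ⨆ k, iterSol H g (k + 1) x := rfl
  rw [this]
  exact (iSup_succ_eq (fun k => iterSol H g k x) (fun i j h => hm h x)).symm

lemma minsol_eq_iSup_iter (H : (X → ℝ≥0∞) → (X → ℝ≥0∞)) (g fstar : X → ℝ≥0∞)
    (hmono : Monotone H)
    (hcont : ∀ fs : ℕ → X → ℝ≥0∞, Monotone fs → H (⨆ n, fs n) = ⨆ n, H (fs n))
    (h : IsMinSol H g fstar) : fstar = ⨆ k, iterSol H g k := by
  apply le_antisymm
  · exact h.2 _ (iSup_iterSol_sol H g hmono hcont)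
  · exact iSup_le fun k => iterSol_le_sol H g hmono fstar h.1 k

/-- Diagonal sup of a doubly-monotone family. -/
lemma iSup_diag {α : Type*} [CompleteLattice α] (a : ℕ → ℕ → α)
    (h1 : ∀ m, Monotone fun n => a n m) (h2 : ∀ n, Monotone (a n)) :
    (⨆ n, a n n) = ⨆ n, ⨆ m, a n m := by
  apply le_antisymm
  · exact iSup_mono fun n => le_iSup (a n) n
  · refine iSup_le fun n => iSup_le fun m => ?_
    calc a n m ≤ a (max n m) (max n m) :=
          le_trans (h1 m (le_max_left n m)) (h2 _ (le_max_right n m))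
      _ ≤ ⨆ k, a k k := le_iSup (fun k => a k k) (max n m)

end Aux

/-- Let `H`, `Hn n` be cone mappings with `Hn ↑ H` and `gs` nonnegative
functions with `gs ↑ g`. Then the minimal nonnegative solutions satisfy
`m_{Hn n}(gs n) ↑ m_H(g)` pointwise. -/
theorem minimal_solution_monotone_limit {X : Type*}
    (H : (X → ℝ≥0∞) → (X → ℝ≥0∞)) (Hn : ℕ → (X → ℝ≥0∞) → (X → ℝ≥0∞))
    (g : X → ℝ≥0∞) (gs : ℕ → X → ℝ≥0∞)
    (hH0 : H 0 = 0)
    (hHadd : ∀ (c₁ c₂ : ℝ≥0∞) (f₁ f₂ : X → ℝ≥0∞),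
      H (c₁ • f₁ + c₂ • f₂) = c₁ • H f₁ + c₂ • H f₂)
    (hHcont : ∀ fs : ℕ → X → ℝ≥0∞, Monotone fs → H (⨆ n, fs n) = ⨆ n, H (fs n))
    (hHn0 : ∀ n, Hn n 0 = 0)
    (hHnadd : ∀ n, ∀ (c₁ c₂ : ℝ≥0∞) (f₁ f₂ : X → ℝ≥0∞),
      Hn n (c₁ • f₁ + c₂ • f₂) = c₁ • Hn n f₁ + c₂ • Hn n f₂)
    (hHncont : ∀ n, ∀ fs : ℕ → X → ℝ≥0∞, Monotone fs →
      Hn n (⨆ m, fs m) = ⨆ m, Hn n (fs m))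
    (hHnmono : ∀ f : X → ℝ≥0∞, Monotone (fun n => Hn n f))
    (hHnlim : ∀ f : X → ℝ≥0∞, (⨆ n, Hn n f) = H f)
    (hgsmono : Monotone gs) (hgslim : (⨆ n, gs n) = g)
    (fs : ℕ → X → ℝ≥0∞) (fstar : X → ℝ≥0∞)
    (hfs : ∀ n, IsMinSol (Hn n) (gs n) (fs n))
    (hfstar : IsMinSol H g fstar) :
    Monotone fs ∧ (⨆ n, fs n) = fstar := by
  have Hmono : Monotone H := cone_mono H hHadd
  have Hnmono : ∀ n, Monotone (Hn n) := fun n => cone_mono (Hn n) (hHnadd n)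
  set it : ℕ → ℕ → X → ℝ≥0∞ := fun n => iterSol (Hn n) (gs n) with hit
  -- monotonicity of the iterates in the approximation index n
  have hitmono_n : ∀ k, Monotone fun n => it n k := by
    intro k
    induction k with
    | zero => exact fun n m _ => le_rfl
    | succ k ih =>
      intro n m hnm
      calc it n (k + 1) = Hn n (it n k) + gs n := rfl
        _ ≤ Hn m (it m k) + gs m := by
            refine add_le_add (le_trans ?_ (hHnmono (it m k) hnm)) (hgsmono hnm)
            exact Hnmono n (ih hnm)
        _ = it m (k + 1) := rfl
  have fs_eq : ∀ n, fs n = ⨆ k, it n k := fun n =>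
    minsol_eq_iSup_iter (Hn n) (gs n) (fs n) (Hnmono n) (hHncont n) (hfs n)
  have fstar_eq : fstar = ⨆ k, iterSol H g k :=
    minsol_eq_iSup_iter H g fstar Hmono hHcont hfstar
  -- limit of the iterates in n
  have hsupk : ∀ k, (⨆ n, it n k) = iterSol H g k := by
    intro k
    induction k with
    | zero => simp [hit, iterSol_zero]
    | succ k ih =>
      funext x
      rw [iSup_apply]
      have step : ∀ n, it n (k + 1) x = Hn n (it n k) x + gs n x := fun n => rfl
      have hmono1 : Monotone fun n => Hn n (it n k) x := by
        intro n m hnm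
        exact le_trans (Hnmono n (hitmono_n k hnm) x) (hHnmono (it m k) hnm x)
      have hmono2 : Monotone fun n => gs n x := fun n m h => hgsmono h x
      have hsum : (⨆ n, it n (k + 1) x)
          = (⨆ n, Hn n (it n k) x) + ⨆ n, gs n x := by
        simp only [step]
        exact (ENNReal.iSup_add_iSup_of_monotone hmono1 hmono2).symm
      have hdiag : (⨆ n, Hn n (it n k) x) = H (iterSol H g k) x := by
        have h1 : ∀ m, Monotone fun n => Hn n (it m k) x := fun m n n' h =>
          hHnmono (it m k) h x
        have h2 : ∀ n, Monotone fun m => Hn n (it m k) x := fun n m m' h =>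
          Hnmono n (hitmono_n k h) x
        rw [iSup_diag (fun n m => Hn n (it m k) x) h1 h2]
        have : ∀ n, (⨆ m, Hn n (it m k) x) = Hn n (iterSol H g k) x := by
          intro n
          have hc := hHncont n (fun m => it m k) (hitmono_n k)
          calc (⨆ m, Hn n (it m k) x) = (⨆ m, Hn n (it m k)) x := (iSup_apply).symm
            _ = Hn n (⨆ m, it m k) x := by rw [← hc]
            _ = Hn n (iterSol H g k) x := by rw [ih]
        simp only [this]
        rw [← iSup_apply, hHnlim (iterSol H g k)]
      rw [hsum, hdiag]
      have : (⨆ n, gs n x) = g x := by rw [← hgslim, iSup_apply]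
      rw [this]
      rfl
  constructor
  · intro n m hnm
    rw [fs_eq n, fs_eq m]
    exact iSup_mono fun k => hitmono_n k hnm
  · calc (⨆ n, fs n) = ⨆ n, ⨆ k, it n k := by simp only [fs_eq]
      _ = ⨆ k, ⨆ n, it n k := iSup_comm
      _ = ⨆ k, iterSol H g k := by simp only [hsupk]
      _ = fstar := fstar_eq.symm
end
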